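/- Sample-budget bound via structural SNRs: assume W = V_K^H H^H H V_K is positive definite and let η > 0. Then every subset S ⊆ {1,…,n} with MSE(S) ≤ η satisfies L_{|S|} ≥ ( k² − η·trace(Λ^{-1} W^{-1}) ) / η, where L_t = max over subsets X ⊆ {1,…,n} with |X| = t of Σ_{j∈X} ℓ_j and ℓ_i = λ_{w,i}^{-1} v_i^H W^{-1} v_i. -/

import Mathlib

open Matrix Finset ComplexOrder

/-- The matrix `M(S) = Λ⁻¹ + ∑_{i ∈ S} λ_{w,i}⁻¹ v_i v_iᴴ`. -/
noncomputable def Mmat {n k : ℕ} (lam : Fin k → ℝ) (lw : Fin n → ℝ)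
    (v : Fin n → Fin k → ℂ) (S : Finset (Fin n)) : Matrix (Fin k) (Fin k) ℂ :=
  (Matrix.diagonal fun j => (lam j : ℂ))⁻¹ +
    ∑ i ∈ S, ((lw i : ℂ))⁻¹ • Matrix.vecMulVec (v i) (star (v i))

/-- The matrix `V_K` whose `i`-th row is `v_iᴴ`. -/
noncomputable def VKmat {n k : ℕ} (v : Fin n → Fin k → ℂ) : Matrix (Fin n) (Fin k) ℂ :=
  Matrix.of fun i j => star (v i j)

/-- The optimal interpolation error covariance `K*(S) = H V_K M(S)⁻¹ V_Kᴴ Hᴴ`. -/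
noncomputable def Kstar {n k m : ℕ} (lam : Fin k → ℝ) (lw : Fin n → ℝ)
    (v : Fin n → Fin k → ℂ) (H : Matrix (Fin m) (Fin n) ℂ) (S : Finset (Fin n)) :
    Matrix (Fin m) (Fin m) ℂ :=
  H * VKmat v * (Mmat lam lw v S)⁻¹ * (VKmat v)ᴴ * Hᴴ

/-- The interpolation mean-square error `MSE(S) = trace K*(S)`, a (nonnegative) real. -/
noncomputable def MSE {n k m : ℕ} (lam : Fin k → ℝ) (lw : Fin n → ℝ)
    (v : Fin n → Fin k → ℂ) (H : Matrix (Fin m) (Fin n) ℂ) (S : Finset (Fin n)) : ℝ :=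
  ((Kstar lam lw v H S).trace).re

/-!
Cyclicity of the trace gives `MSE(S) = tr(M(S)⁻¹ W)`, while
`tr(W⁻¹ M(S)) = tr(Λ⁻¹ W⁻¹) + ∑_{i ∈ S} ℓ_i ≤ tr(Λ⁻¹ W⁻¹) + L_{|S|}`.
For positive definite `A, B` of size `k`, the Cauchy–Schwarz inequality for the Frobenius inner
product, applied to `A^{-1/2} B^{1/2}` and its inverse `B^{-1/2} A^{1/2}`, gives
`k² = |tr 1|² ≤ tr(A⁻¹ B) · tr(B⁻¹ A)`. With `A = M(S)` and `B = W` this yields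
`k² ≤ η (tr(Λ⁻¹ W⁻¹) + L_{|S|})`.
-/

namespace Matrix

section Frobenius

attribute [local instance] frobeniusNormedAddCommGroup

open scoped MatrixOrder

variable {ι l 𝕜 : Type*} [Fintype ι] [Fintype l] [RCLike 𝕜]

theorem re_trace_conjTranspose_mul_self_eq_frobenius_norm_sq (X : Matrix l ι 𝕜) :
    RCLike.re (Xᴴ * X).trace = ‖X‖ ^ 2 := by
  rw [frobenius_norm_def, ← Real.rpow_natCast, ← Real.rpow_mul (by positivity)]
  simp [trace, mul_apply, Finset.sum_comm (γ := ι), RCLike.star_def, RCLike.conj_mul]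

theorem norm_trace_mul_le_frobenius_norm_mul (X : Matrix l ι 𝕜) (Y : Matrix ι l 𝕜) :
    ‖(X * Y).trace‖ ≤ ‖X‖ * ‖Y‖ := by
  calc ‖(X * Y).trace‖
      = ‖inner 𝕜 (WithLp.toLp 2 fun i => WithLp.toLp 2 (Xᴴ i))
          (WithLp.toLp 2 fun i => WithLp.toLp 2 (Y i))‖ := by
        congr 1
        simp [trace, mul_apply, PiLp.inner_apply, Finset.sum_comm (γ := ι), mul_comm]
    -- the Frobenius norm of `X` is by definition that of `toLp 2 fun i => toLp 2 (X i)`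
    _ ≤ ‖Xᴴ‖ * ‖Y‖ := norm_inner_le_norm _ _
    _ = ‖X‖ * ‖Y‖ := by rw [frobenius_norm_conjTranspose]

theorem re_trace_inv_mul_eq_frobenius_norm_sq [DecidableEq ι] {A B : Matrix ι ι 𝕜}
    (hA : A.PosSemidef) (hB : B.PosSemidef) :
    RCLike.re (A⁻¹ * B).trace = ‖(CFC.sqrt A)⁻¹ * CFC.sqrt B‖ ^ 2 := by
  set P := CFC.sqrt A
  set Q := CFC.sqrt B
  have hP : Pᴴ = P := (CFC.sqrt_nonneg A).posSemidef.1
  have hQ : Qᴴ = Q := (CFC.sqrt_nonneg B).posSemidef.1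
  have hA' : A⁻¹ = P⁻¹ * P⁻¹ := by
    rw [← mul_inv_rev, CFC.sqrt_mul_sqrt_self A hA.nonneg]
  rw [← re_trace_conjTranspose_mul_self_eq_frobenius_norm_sq, conjTranspose_mul, hQ,
    conjTranspose_nonsing_inv, hP, Matrix.mul_assoc, ← Matrix.mul_assoc P⁻¹, ← hA',
    trace_mul_comm Q, Matrix.mul_assoc, CFC.sqrt_mul_sqrt_self B hB.nonneg]

theorem re_trace_inv_mul_nonneg [DecidableEq ι] {A B : Matrix ι ι 𝕜} (hA : A.PosSemidef)
    (hB : B.PosSemidef) : 0 ≤ RCLike.re (A⁻¹ * B).trace :=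
  re_trace_inv_mul_eq_frobenius_norm_sq hA hB ▸ sq_nonneg _

theorem sq_card_le_re_trace_inv_mul_mul_re_trace_inv_mul [DecidableEq ι] {A B : Matrix ι ι 𝕜}
    (hA : A.PosDef) (hB : B.PosDef) :
    (Fintype.card ι : ℝ) ^ 2 ≤ RCLike.re (A⁻¹ * B).trace * RCLike.re (B⁻¹ * A).trace := by
  have isUnit_det_sqrt {C : Matrix ι ι 𝕜} (hC : C.PosDef) : IsUnit (CFC.sqrt C).det :=
    (isUnit_iff_isUnit_det _).mp <| (CFC.isUnit_sqrt_iff C hC.posSemidef.nonneg).mpr hC.isUnit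
  rw [re_trace_inv_mul_eq_frobenius_norm_sq hA.posSemidef hB.posSemidef,
    re_trace_inv_mul_eq_frobenius_norm_sq hB.posSemidef hA.posSemidef, ← mul_pow]
  refine pow_le_pow_left₀ (Nat.cast_nonneg _) ?_ 2
  calc (Fintype.card ι : ℝ)
      = ‖((CFC.sqrt A)⁻¹ * CFC.sqrt B * ((CFC.sqrt B)⁻¹ * CFC.sqrt A)).trace‖ := by
        rw [Matrix.mul_assoc, mul_nonsing_inv_cancel_left _ _ (isUnit_det_sqrt hB),
          nonsing_inv_mul _ (isUnit_det_sqrt hA), trace_one, RCLike.norm_natCast]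
    _ ≤ _ := norm_trace_mul_le_frobenius_norm_mul _ _

end Frobenius

end Matrix

theorem Mmat_posDef {n k : ℕ} {lam : Fin k → ℝ} (hlam : ∀ j, 0 < lam j) {lw : Fin n → ℝ}
    (hlw : ∀ i, 0 < lw i) (v : Fin n → Fin k → ℂ) (S : Finset (Fin n)) :
    (Mmat lam lw v S).PosDef :=
  (PosDef.inv (posDef_diagonal_iff.mpr fun j => by exact_mod_cast hlam j)).add_posSemidef <|
    posSemidef_sum S fun i _ => (posSemidef_vecMulVec_self_star (v i)).smul <| by
      simpa using (hlw i).le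

theorem MSE_eq_re_trace_inv_mul {n k m : ℕ} (lam : Fin k → ℝ) (lw : Fin n → ℝ)
    (v : Fin n → Fin k → ℂ) (H : Matrix (Fin m) (Fin n) ℂ) (S : Finset (Fin n)) :
    MSE lam lw v H S = ((Mmat lam lw v S)⁻¹ * ((VKmat v)ᴴ * Hᴴ * H * VKmat v)).trace.re := by
  rw [MSE, Kstar, Matrix.mul_assoc _ (VKmat v)ᴴ, ← conjTranspose_mul, trace_mul_cycle,
    trace_mul_comm, conjTranspose_mul]
  simp only [Matrix.mul_assoc]

theorem re_trace_inv_mul_Mmat {n k : ℕ} (lam : Fin k → ℝ) (lw : Fin n → ℝ)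
    (v : Fin n → Fin k → ℂ) (S : Finset (Fin n)) (W : Matrix (Fin k) (Fin k) ℂ) :
    (W⁻¹ * Mmat lam lw v S).trace.re = ((diagonal fun j => (lam j : ℂ))⁻¹ * W⁻¹).trace.re +
      ∑ i ∈ S, (lw i)⁻¹ * (star (v i) ⬝ᵥ (W⁻¹ *ᵥ v i)).re := by
  simp only [Mmat, Matrix.mul_add, Matrix.mul_sum, Matrix.mul_smul, trace_add, trace_sum,
    trace_smul, mul_vecMulVec, trace_vecMulVec, Complex.add_re, Complex.re_sum,
    trace_mul_comm W⁻¹]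
  congr 1
  refine Finset.sum_congr rfl fun i _ => ?_
  rw [dotProduct_comm, smul_eq_mul, ← Complex.ofReal_inv, Complex.re_ofReal_mul]

/-- Sample-budget bound via structural SNRs: if `W = V_Kᴴ Hᴴ H V_K` is
positive definite and `η > 0`, then every `S` with `MSE(S) ≤ η` satisfies
`L_{|S|} ≥ (k² - η · trace(Λ⁻¹ W⁻¹)) / η`, where `L_t` is the maximum of `∑_{j∈X} ℓ_j`
over subsets `X` of cardinality `t` and `ℓ_i = λ_{w,i}⁻¹ v_iᴴ W⁻¹ v_i`. -/
theorem sampling_budget_bound_structural_SNR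
    (n k m : ℕ)
    (v : Fin n → Fin k → ℂ)
    (H : Matrix (Fin m) (Fin n) ℂ)
    (lam : Fin k → ℝ) (hlam : ∀ j, 0 < lam j)
    (lw : Fin n → ℝ) (hlw : ∀ i, 0 < lw i)
    (W : Matrix (Fin k) (Fin k) ℂ)
    (hWdef : W = (VKmat v)ᴴ * Hᴴ * H * VKmat v)
    (hW : W.PosDef)
    (ell : Fin n → ℝ)
    (hell : ∀ i, ell i = (lw i)⁻¹ * (star (v i) ⬝ᵥ (W⁻¹ *ᵥ v i)).re)
    (η : ℝ) (hη : 0 < η)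
    (S : Finset (Fin n))
    (hMSE : MSE lam lw v H S ≤ η)
    (Lt : ℝ)
    (hLt : IsGreatest
      ((fun X : Finset (Fin n) => ∑ j ∈ X, ell j) '' {X : Finset (Fin n) | X.card = S.card})
      Lt) :
    ((k : ℝ) ^ 2 -
        η * (((Matrix.diagonal fun j => (lam j : ℂ))⁻¹ * W⁻¹).trace).re) / η
      ≤ Lt := by
  set M := Mmat lam lw v S
  have hM : M.PosDef := Mmat_posDef hlam hlw v S
  rw [MSE_eq_re_trace_inv_mul, ← hWdef] at hMSE
  have hS : ∑ j ∈ S, ell j ≤ Lt := hLt.2 ⟨S, rfl, rfl⟩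
  rw [div_le_iff₀ hη, sub_le_iff_le_add]
  calc (k : ℝ) ^ 2
      ≤ (M⁻¹ * W).trace.re * (W⁻¹ * M).trace.re := by
        simpa using sq_card_le_re_trace_inv_mul_mul_re_trace_inv_mul hM hW
    _ ≤ η * (W⁻¹ * M).trace.re :=
        mul_le_mul_of_nonneg_right hMSE (re_trace_inv_mul_nonneg hW.posSemidef hM.posSemidef)
    _ = η * (((diagonal fun j => (lam j : ℂ))⁻¹ * W⁻¹).trace.re + ∑ j ∈ S, ell j) := by
        simp only [M, re_trace_inv_mul_Mmat, hell]
    _ ≤ Lt * η + η * ((diagonal fun j => (lam j : ℂ))⁻¹ * W⁻¹).trace.re := by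
        linarith [mul_le_mul_of_nonneg_left hS hη.le]
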